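/- Fix κ with 0 < κ < π/2, and let h : ℝ → ℝ be the Vow radial profile: h(ω) = √(1/2 + tan(κ(1 + 2·log₂(2ω/π)))/(2·tan κ)) for π/4 ≤ ω < π/2, h(ω) = √(1/2 − tan(κ(1 + 2·log₂(ω/π)))/(2·tan κ)) for π/2 ≤ ω ≤ π, and h(ω) = 0 otherwise. Then (i) for every ω in [π/4, π] the expression under the corresponding square root lies in [0,1], so 0 ≤ h(ω) ≤ 1 everywhere, and (ii) h is continuous on the open interval (0, ∞); in particular the two defining pieces agree in the limit at ω = π/2 with common value 1, and h tends to 0 at ω = π/4 and equals 0 at ω = π. -/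

import Mathlib

/-!
On `[π/4, π/2]` and `[π/2, π]` the ratios `2ω/π` and `ω/π` sweep `[1/2, 1]`, where
`1 + 2 log₂ y` sweeps `[-1, 1]`; so the tangent is taken at an angle in `[-κ, κ]` and is bounded by
`tan κ` in absolute value, which puts both radicands in `[0, 1]`. At the end points of `[1/2, 1]`
the ramp `tan (κ (1 + 2 log₂ y)) / (2 tan κ)` takes the values `∓1/2`, so the four pieces of the
profile (`0`, rising branch, falling branch, `0`) agree at `π/4`, `π/2` and `π`; each piece being
continuous on its closed interval, the profile is continuous on all of `ℝ`.
-/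

open Real Filter Topology Set

lemma abs_tan_le_tan_of_abs_le {a κ : ℝ} (hκ : κ < π / 2) (ha : |a| ≤ κ) : |tan a| ≤ tan κ := by
  obtain ⟨hlo, hhi⟩ := abs_le.1 ha
  have ha' : a ∈ Ioo (-(π / 2)) (π / 2) := ⟨by linarith, by linarith⟩
  have hle : tan a ≤ tan κ := strictMonoOn_tan.monotoneOn ha' ⟨by linarith, hκ⟩ hhi
  have hge : tan (-κ) ≤ tan a := strictMonoOn_tan.monotoneOn ⟨by linarith, by linarith⟩ ha' hlo
  rw [tan_neg] at hge
  exact abs_le.2 ⟨hge, hle⟩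

lemma abs_one_add_two_mul_logb_two_le_one {y : ℝ} (hy : y ∈ Icc (1 / 2) 1) :
    |1 + 2 * logb 2 y| ≤ 1 := by
  have hlo : -1 ≤ logb 2 y := by
    calc -1 = logb 2 (1 / 2) := by rw [one_div, logb_inv, logb_self_eq_one one_lt_two]
      _ ≤ logb 2 y := logb_le_logb_of_le one_lt_two (by norm_num) hy.1
  have hhi : logb 2 y ≤ 0 := logb_nonpos one_lt_two (by linarith [hy.1]) hy.2
  exact abs_le.2 ⟨by linarith, by linarith⟩

lemma abs_mul_one_add_two_mul_logb_two_le {κ y : ℝ} (hκ : 0 ≤ κ) (hy : y ∈ Icc (1 / 2) 1) :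
    |κ * (1 + 2 * logb 2 y)| ≤ κ := by
  rw [abs_mul, abs_of_nonneg hκ]
  exact mul_le_of_le_one_right hκ (abs_one_add_two_mul_logb_two_le_one hy)

lemma continuous_of_continuousOn_Iic_Icc_Icc_Ici {α : Type*} [TopologicalSpace α] {f : ℝ → α}
    {a b c : ℝ} (hab : a ≤ b) (hbc : b ≤ c) (h₁ : ContinuousOn f (Iic a))
    (h₂ : ContinuousOn f (Icc a b)) (h₃ : ContinuousOn f (Icc b c))
    (h₄ : ContinuousOn f (Ici c)) : Continuous f := by
  have h₁₂ := h₁.union_of_isClosed h₂ isClosed_Iic isClosed_Icc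
  rw [Iic_union_Icc_eq_Iic hab] at h₁₂
  have h₃₄ := h₃.union_of_isClosed h₄ isClosed_Icc isClosed_Ici
  rw [Icc_union_Ici_eq_Ici hbc] at h₃₄
  rw [← continuousOn_univ, ← Iic_union_Ici (a := b)]
  exact h₁₂.union_of_isClosed h₃₄ isClosed_Iic isClosed_Ici

lemma two_mul_div_pi_mem_Icc {ω : ℝ} (hω : ω ∈ Icc (π / 4) (π / 2)) :
    2 * ω / π ∈ Icc (1 / 2) 1 := by
  obtain ⟨hlo, hhi⟩ := hω
  constructor
  · rw [le_div_iff₀ pi_pos]; linarith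
  · rw [div_le_one pi_pos]; linarith

lemma div_pi_mem_Icc {ω : ℝ} (hω : ω ∈ Icc (π / 2) π) : ω / π ∈ Icc (1 / 2) 1 := by
  obtain ⟨hlo, hhi⟩ := hω
  constructor
  · rw [le_div_iff₀ pi_pos]; linarith
  · rw [div_le_one pi_pos]; linarith

noncomputable def vowRamp (κ y : ℝ) : ℝ :=
  tan (κ * (1 + 2 * logb 2 y)) / (2 * tan κ)

lemma abs_vowRamp_le {κ y : ℝ} (hκ₀ : 0 < κ) (hκ₁ : κ < π / 2) (hy : y ∈ Icc (1 / 2) 1) :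
    |vowRamp κ y| ≤ 1 / 2 := by
  have htan : 0 < tan κ := tan_pos_of_pos_of_lt_pi_div_two hκ₀ hκ₁
  rw [vowRamp, abs_div, abs_of_pos (by positivity : 0 < 2 * tan κ), div_le_iff₀ (by positivity)]
  linarith [abs_tan_le_tan_of_abs_le hκ₁ (abs_mul_one_add_two_mul_logb_two_le hκ₀.le hy)]

lemma half_add_vowRamp_mem_Icc {κ y : ℝ} (hκ₀ : 0 < κ) (hκ₁ : κ < π / 2)
    (hy : y ∈ Icc (1 / 2) 1) : 1 / 2 + vowRamp κ y ∈ Icc 0 1 := by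
  obtain ⟨hlo, hhi⟩ := abs_le.1 (abs_vowRamp_le hκ₀ hκ₁ hy)
  exact ⟨by linarith, by linarith⟩

lemma half_sub_vowRamp_mem_Icc {κ y : ℝ} (hκ₀ : 0 < κ) (hκ₁ : κ < π / 2)
    (hy : y ∈ Icc (1 / 2) 1) : 1 / 2 - vowRamp κ y ∈ Icc 0 1 := by
  obtain ⟨hlo, hhi⟩ := abs_le.1 (abs_vowRamp_le hκ₀ hκ₁ hy)
  exact ⟨by linarith, by linarith⟩

lemma vowRamp_half {κ : ℝ} (hκ : tan κ ≠ 0) : vowRamp κ (1 / 2) = -(1 / 2) := by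
  rw [vowRamp, one_div, logb_inv, logb_self_eq_one one_lt_two,
    show κ * (1 + 2 * -1) = -κ by ring, tan_neg]
  field_simp

lemma vowRamp_one {κ : ℝ} (hκ : tan κ ≠ 0) : vowRamp κ 1 = 1 / 2 := by
  rw [vowRamp, logb_one, show κ * (1 + 2 * 0) = κ by ring]
  field_simp

lemma continuousOn_vowRamp {κ : ℝ} (hκ₀ : 0 ≤ κ) (hκ₁ : κ < π / 2) :
    ContinuousOn (vowRamp κ) (Icc (1 / 2) 1) := by
  intro y hy
  have hy₀ : y ≠ 0 := by linarith [hy.1]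
  obtain ⟨hlo, hhi⟩ := abs_le.1 (abs_mul_one_add_two_mul_logb_two_le hκ₀ hy)
  have hcos : cos (κ * (1 + 2 * logb 2 y)) ≠ 0 :=
    (cos_pos_of_mem_Ioo ⟨by linarith, by linarith⟩).ne'
  have harg : ContinuousAt (fun y => κ * (1 + 2 * logb 2 y)) y := by
    have := continuousAt_logb hy₀ (b := 2)
    fun_prop
  have htan :=
    ContinuousAt.comp (f := fun y => κ * (1 + 2 * logb 2 y)) (continuousAt_tan.2 hcos) harg
  exact (htan.div_const _).continuousWithinAt

noncomputable def vowProfile (κ ω : ℝ) : ℝ :=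
  if π / 4 ≤ ω ∧ ω < π / 2 then √(1 / 2 + vowRamp κ (2 * ω / π))
  else if π / 2 ≤ ω ∧ ω ≤ π then √(1 / 2 - vowRamp κ (ω / π))
  else 0

section vowProfile

variable {κ : ℝ}

lemma vowProfile_eq_zero_of_lt {ω : ℝ} (hω : ω < π / 4) : vowProfile κ ω = 0 := by
  rw [vowProfile, if_neg (fun h => by linarith [h.1]), if_neg (fun h => by linarith [h.1])]

lemma vowProfile_eq_zero_of_gt {ω : ℝ} (hω : π < ω) : vowProfile κ ω = 0 := by
  rw [vowProfile, if_neg (fun h => by linarith [h.2, pi_pos]), if_neg (fun h => by linarith [h.2])]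

lemma vowProfile_of_mem_Ico {ω : ℝ} (hω : ω ∈ Ico (π / 4) (π / 2)) :
    vowProfile κ ω = √(1 / 2 + vowRamp κ (2 * ω / π)) := by
  rw [vowProfile, if_pos ⟨hω.1, hω.2⟩]

lemma vowProfile_of_mem_Icc {ω : ℝ} (hω : ω ∈ Icc (π / 2) π) :
    vowProfile κ ω = √(1 / 2 - vowRamp κ (ω / π)) := by
  rw [vowProfile, if_neg (fun h => by linarith [h.2, hω.1]), if_pos ⟨hω.1, hω.2⟩]

lemma vowProfile_pi_div_four (hκ : tan κ ≠ 0) : vowProfile κ (π / 4) = 0 := by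
  rw [vowProfile_of_mem_Ico ⟨le_rfl, by linarith [pi_pos]⟩,
    show 2 * (π / 4) / π = 1 / 2 by field_simp; ring, vowRamp_half hκ]
  norm_num

lemma vowProfile_pi_div_two (hκ : tan κ ≠ 0) : vowProfile κ (π / 2) = 1 := by
  rw [vowProfile_of_mem_Icc ⟨le_rfl, by linarith [pi_pos]⟩,
    show π / 2 / π = 1 / 2 by field_simp, vowRamp_half hκ]
  norm_num

lemma vowProfile_pi (hκ : tan κ ≠ 0) : vowProfile κ π = 0 := by
  rw [vowProfile_of_mem_Icc ⟨by linarith [pi_pos], le_rfl⟩, div_self pi_pos.ne', vowRamp_one hκ]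
  norm_num

lemma vowProfile_mem_Icc (hκ₀ : 0 < κ) (hκ₁ : κ < π / 2) (ω : ℝ) : vowProfile κ ω ∈ Icc 0 1 := by
  rw [vowProfile]
  split_ifs with h₁ h₂
  · exact ⟨sqrt_nonneg _, sqrt_le_one.2
      (half_add_vowRamp_mem_Icc hκ₀ hκ₁ (two_mul_div_pi_mem_Icc ⟨h₁.1, h₁.2.le⟩)).2⟩
  · exact ⟨sqrt_nonneg _, sqrt_le_one.2 (half_sub_vowRamp_mem_Icc hκ₀ hκ₁ (div_pi_mem_Icc h₂)).2⟩
  · exact ⟨le_rfl, zero_le_one⟩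

lemma vowProfile_eqOn_Iic (hκ : tan κ ≠ 0) : EqOn (vowProfile κ) 0 (Iic (π / 4)) := by
  intro ω hω
  rcases (mem_Iic.1 hω).lt_or_eq with h | rfl
  · exact vowProfile_eq_zero_of_lt h
  · exact vowProfile_pi_div_four hκ

lemma vowProfile_eqOn_Ici (hκ : tan κ ≠ 0) : EqOn (vowProfile κ) 0 (Ici π) := by
  intro ω hω
  rcases (mem_Ici.1 hω).lt_or_eq with h | rfl
  · exact vowProfile_eq_zero_of_gt h
  · exact vowProfile_pi hκ

lemma vowProfile_eqOn_rising (hκ : tan κ ≠ 0) :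
    EqOn (vowProfile κ) (fun ω => √(1 / 2 + vowRamp κ (2 * ω / π))) (Icc (π / 4) (π / 2)) := by
  intro ω hω
  rcases hω.2.lt_or_eq with h | rfl
  · exact vowProfile_of_mem_Ico ⟨hω.1, h⟩
  · dsimp only
    rw [vowProfile_pi_div_two hκ, show 2 * (π / 2) / π = 1 by field_simp, vowRamp_one hκ]
    norm_num

lemma continuous_vowProfile (hκ₀ : 0 < κ) (hκ₁ : κ < π / 2) : Continuous (vowProfile κ) := by
  have hκ : tan κ ≠ 0 := (tan_pos_of_pos_of_lt_pi_div_two hκ₀ hκ₁).ne'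
  have hramp := continuousOn_vowRamp hκ₀.le hκ₁
  have hrising : ContinuousOn (fun ω => √(1 / 2 + vowRamp κ (2 * ω / π))) (Icc (π / 4) (π / 2)) :=
    (continuousOn_const.add (hramp.comp (by fun_prop) fun _ => two_mul_div_pi_mem_Icc)).sqrt
  have hfalling : ContinuousOn (fun ω => √(1 / 2 - vowRamp κ (ω / π))) (Icc (π / 2) π) :=
    (continuousOn_const.sub (hramp.comp (by fun_prop) fun _ => div_pi_mem_Icc)).sqrt
  exact continuous_of_continuousOn_Iic_Icc_Icc_Ici (by linarith [pi_pos]) (by linarith [pi_pos])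
    (continuousOn_const.congr (vowProfile_eqOn_Iic hκ)) (hrising.congr (vowProfile_eqOn_rising hκ))
    (hfalling.congr fun _ => vowProfile_of_mem_Icc)
    (continuousOn_const.congr (vowProfile_eqOn_Ici hκ))

end vowProfile

/-- Well-definedness, bounds, and continuity of the Vow (variance-optimal
wavelet) radial profile. -/
theorem vow_profile_bounds_and_continuity
    (κ : ℝ) (hκ₀ : 0 < κ) (hκ₁ : κ < π / 2)
    (h : ℝ → ℝ)
    (hdef : ∀ ω : ℝ,
      h ω =
        if π / 4 ≤ ω ∧ ω < π / 2 then
          Real.sqrt (1 / 2 + Real.tan (κ * (1 + 2 * Real.logb 2 (2 * ω / π))) / (2 * Real.tan κ))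
        else if π / 2 ≤ ω ∧ ω ≤ π then
          Real.sqrt (1 / 2 - Real.tan (κ * (1 + 2 * Real.logb 2 (ω / π))) / (2 * Real.tan κ))
        else 0) :
    -- (i) the expressions under the square roots lie in [0,1] on their ranges,
    (∀ ω : ℝ, π / 4 ≤ ω → ω < π / 2 →
      (1 / 2 + Real.tan (κ * (1 + 2 * Real.logb 2 (2 * ω / π))) / (2 * Real.tan κ))
        ∈ Set.Icc (0 : ℝ) 1) ∧
    (∀ ω : ℝ, π / 2 ≤ ω → ω ≤ π →
      (1 / 2 - Real.tan (κ * (1 + 2 * Real.logb 2 (ω / π))) / (2 * Real.tan κ))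
        ∈ Set.Icc (0 : ℝ) 1) ∧
    -- so 0 ≤ h(ω) ≤ 1 everywhere,
    (∀ ω : ℝ, h ω ∈ Set.Icc (0 : ℝ) 1) ∧
    -- (ii) h is continuous on (0, ∞),
    ContinuousOn h (Set.Ioi (0 : ℝ)) ∧
    -- in particular the two pieces agree in the limit at π/2 with common value 1,
    Tendsto h (𝓝[<] (π / 2)) (𝓝 1) ∧ h (π / 2) = 1 ∧
    -- h tends to 0 at π/4 and equals 0 at π.
    Tendsto h (𝓝 (π / 4)) (𝓝 0) ∧ h π = 0 := by
  have hκ : tan κ ≠ 0 := (tan_pos_of_pos_of_lt_pi_div_two hκ₀ hκ₁).ne'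
  obtain rfl : h = vowProfile κ := funext hdef
  have hcont := continuous_vowProfile hκ₀ hκ₁
  refine ⟨fun ω h₁ h₂ => half_add_vowRamp_mem_Icc hκ₀ hκ₁ (two_mul_div_pi_mem_Icc ⟨h₁, h₂.le⟩),
    fun ω h₁ h₂ => half_sub_vowRamp_mem_Icc hκ₀ hκ₁ (div_pi_mem_Icc ⟨h₁, h₂⟩),
    vowProfile_mem_Icc hκ₀ hκ₁, hcont.continuousOn, ?_, vowProfile_pi_div_two hκ, ?_,
    vowProfile_pi hκ⟩
  · rw [← vowProfile_pi_div_two hκ]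
    exact hcont.continuousAt.tendsto.mono_left nhdsWithin_le_nhds
  · rw [← vowProfile_pi_div_four hκ]
    exact hcont.continuousAt.tendsto
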